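/- arXiv:1611.00404 — 8 statements merged into one kernel-verified Lean document; each statement's English description precedes it below -/
import Mathlib

section
/- If a feasible RDM allocation has, for every user n and every eligible server i, a bottleneck resource (a resource r with d_{n,r}>0, Σ_m x_{m,i} d_{m,r} = c_{i,r}, and s_{n,i}/φ_n ≥ s_{m,i}/φ_m for all m with x_{m,i} d_{m,r} > 0), then the allocation satisfies PS-DSF: no x_n = Σ_i x_{n,i} can be increased while maintaining feasibility without decreasing x_{m,i} for some user m and server i with s_{m,i}/φ_m ≤ s_{n,i}/φ_n. -/
/-- RDM feasibility: nonnegative allocation, no tasks on ineligible servers,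
and per-server per-resource capacity constraints. -/
def RDMFeasible {N K R : Type*} [Fintype N]
    (c : K → R → ℝ) (d : N → R → ℝ) (γ : N → K → ℝ) (x : N → K → ℝ) : Prop :=
  (∀ n i, 0 ≤ x n i) ∧ (∀ n i, γ n i = 0 → x n i = 0) ∧
    ∀ i r, ∑ n, x n i * d n r ≤ c i r

/-- Virtual dominant share of user `n` w.r.t. server `i`: `s_{n,i} = x_n / γ_{n,i}`. -/
noncomputable def vds {N K : Type*} [Fintype K]
    (γ : N → K → ℝ) (x : N → K → ℝ) (n : N) (i : K) : ℝ :=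
  (∑ j, x n j) / γ n i

/-- PS-DSF (RDM): `x` is feasible and no user's total task count can be increased,
maintaining feasibility, without decreasing `x m i` for some user `m` and (eligible)
server `i` with `s_{m,i}/φ_m ≤ s_{n,i}/φ_n`. -/
def PSDSF_RDM {N K R : Type*} [Fintype N] [Fintype K]
    (c : K → R → ℝ) (d : N → R → ℝ) (γ : N → K → ℝ) (φ : N → ℝ) (x : N → K → ℝ) : Prop :=
  RDMFeasible c d γ x ∧ ∀ x' : N → K → ℝ, RDMFeasible c d γ x' → ∀ n : N,
    (∑ i, x n i) < (∑ i, x' n i) →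
      ∃ m i, x' m i < x m i ∧ 0 < γ m i ∧ 0 < γ n i ∧
        vds γ x m i / φ m ≤ vds γ x n i / φ n

/-- Resource `r` is a bottleneck for user `n` w.r.t. server `i` under allocation `x`. -/
def BottleneckRes {N K R : Type*} [Fintype N] [Fintype K]
    (c : K → R → ℝ) (d : N → R → ℝ) (γ : N → K → ℝ) (φ : N → ℝ) (x : N → K → ℝ)
    (n : N) (i : K) (r : R) : Prop :=
  0 < d n r ∧ (∑ m, x m i * d m r) = c i r ∧
    ∀ m, 0 < x m i * d m r → vds γ x m i / φ m ≤ vds γ x n i / φ n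

/-- Theorem 1, sufficiency: if a feasible RDM allocation has a bottleneck resource for
every user w.r.t. every eligible server, then it satisfies PS-DSF. -/
theorem bottleneck_implies_psdsf
    {N K R : Type*} [Fintype N] [Fintype K] [Fintype R]
    (c : K → R → ℝ) (hc : ∀ i r, 0 < c i r)
    (d : N → R → ℝ) (hd : ∀ n r, 0 ≤ d n r) (hdpos : ∀ n, ∃ r, 0 < d n r)
    (φ : N → ℝ) (hφ : ∀ n, 0 < φ n)
    (γ : N → K → ℝ)
    (hγ : ∀ n i, IsLeast {y : ℝ | ∃ r, 0 < d n r ∧ y = c i r / d n r} (γ n i) ∨ γ n i = 0)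
    (x : N → K → ℝ)
    (hfeas : RDMFeasible c d γ x)
    (hbn : ∀ n : N, ∀ i : K, 0 < γ n i → ∃ r, BottleneckRes c d γ φ x n i r) :
    PSDSF_RDM c d γ φ x := by
  refine ⟨hfeas, ?_⟩
  intro x' hfeas' n hlt
  obtain ⟨hx0, hx0', hcap⟩ := hfeas
  obtain ⟨hx0₂, hx0₂', hcap₂⟩ := hfeas'
  have hγpos : ∀ m i, γ m i ≠ 0 → 0 < γ m i := by
    intro m i h
    rcases hγ m i with hL | h0
    · obtain ⟨⟨r, hr, hrq⟩, -⟩ := hL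
      rw [hrq]; exact div_pos (hc i r) hr
    · exact absurd h0 h
  obtain ⟨i, -, hi⟩ : ∃ i ∈ Finset.univ, x n i < x' n i := by
    by_contra h
    push_neg at h
    exact absurd (Finset.sum_le_sum fun i _ => h i (Finset.mem_univ i)) (not_le.mpr hlt)
  have hγn : 0 < γ n i := by
    apply hγpos
    intro h0
    have := hx0₂' n i h0
    have := hx0 n i
    linarith
  obtain ⟨r, hdr, hsum, hbot⟩ := hbn n i hγn
  obtain ⟨m, -, hm⟩ : ∃ m ∈ Finset.univ, x' m i * d m r < x m i * d m r := by
    by_contra h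
    push_neg at h
    have hlt2 : ∑ m, x m i * d m r < ∑ m, x' m i * d m r := by
      refine Finset.sum_lt_sum (fun m _ => h m (Finset.mem_univ m))
        ⟨n, Finset.mem_univ n, mul_lt_mul_of_pos_right hi hdr⟩
    rw [hsum] at hlt2
    exact absurd (hcap₂ i r) (not_le.mpr hlt2)
  have hxm : 0 < x m i * d m r := lt_of_le_of_lt (mul_nonneg (hx0₂ m i) (hd m r)) hm
  have hdm : 0 < d m r := by
    rcases (hd m r).lt_or_eq with h | h
    · exact h
    · exfalso; rw [← h, mul_zero] at hxm; exact lt_irrefl 0 hxm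
  have hxmi : 0 < x m i := by nlinarith [hd m r]
  have hγm : 0 < γ m i := by
    apply hγpos
    intro h0
    have := hx0' m i h0
    linarith
  exact ⟨m, i, lt_of_mul_lt_mul_right hm (le_of_lt hdm), hγm, hγn, hbot m hxm⟩
end

section
/- If a feasible RDM allocation satisfies PS-DSF, then for every user n and every eligible server i there exists a bottleneck resource: a resource r with d_{n,r} > 0, Σ_m x_{m,i} d_{m,r} = c_{i,r}, and s_{n,i}/φ_n ≥ s_{m,i}/φ_m for every user m with x_{m,i} d_{m,r} > 0. -/
/-- Theorem 1, necessity: if a feasible RDM allocation satisfies PS-DSF, then every user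
has a bottleneck resource with respect to every eligible server. -/
theorem psdsf_implies_bottleneck
    {N K R : Type*} [Fintype N] [Fintype K] [Fintype R]
    (c : K → R → ℝ) (hc : ∀ i r, 0 < c i r)
    (d : N → R → ℝ) (hd : ∀ n r, 0 ≤ d n r) (hdpos : ∀ n, ∃ r, 0 < d n r)
    (φ : N → ℝ) (hφ : ∀ n, 0 < φ n)
    (γ : N → K → ℝ)
    (hγ : ∀ n i, IsLeast {y : ℝ | ∃ r, 0 < d n r ∧ y = c i r / d n r} (γ n i) ∨ γ n i = 0)
    (x : N → K → ℝ)
    (hpsdsf : PSDSF_RDM c d γ φ x) :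
    ∀ n : N, ∀ i : K, 0 < γ n i → ∃ r, BottleneckRes c d γ φ x n i r := by
  classical
  intro n i hγni
  by_contra hno
  push_neg at hno
  obtain ⟨⟨hx0, hxel, hcap⟩, hps⟩ := hpsdsf
  set B : Finset N := Finset.univ.filter
    (fun m => vds γ x n i / φ n < vds γ x m i / φ m) with hB
  set y : N → ℝ := fun m => if m ∈ B then x m i / 2 else x m i with hy
  have hy_le : ∀ m, y m ≤ x m i := by
    intro m; simp only [hy]
    split
    · linarith [hx0 m i]
    · exact le_rfl
  have hy_nonneg : ∀ m, 0 ≤ y m := by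
    intro m; simp only [hy]
    split
    · linarith [hx0 m i]
    · exact hx0 m i
  have hyd_le : ∀ r, ∑ m, y m * d m r ≤ ∑ m, x m i * d m r :=
    fun r => Finset.sum_le_sum (fun m _ => mul_le_mul_of_nonneg_right (hy_le m) (hd m r))
  have hnB : n ∉ B := by simp [hB]
  have hkey : ∀ r, 0 < d n r → ∑ m, y m * d m r < c i r := by
    intro r hr
    have hnb := hno r
    rw [BottleneckRes] at hnb
    push_neg at hnb
    by_cases hsum : ∑ m, x m i * d m r = c i r
    · obtain ⟨m₀, hm₀pos, hm₀⟩ := hnb hr hsum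
      have hm₀B : m₀ ∈ B := by
        simp only [hB, Finset.mem_filter, Finset.mem_univ, true_and]
        exact hm₀
      have hxm₀ : 0 < x m₀ i := by nlinarith [hx0 m₀ i, hd m₀ r]
      have hdm₀ : 0 < d m₀ r := by nlinarith [hx0 m₀ i, hd m₀ r]
      have hlt : ∑ m, y m * d m r < ∑ m, x m i * d m r := by
        apply Finset.sum_lt_sum
        · intro m _; exact mul_le_mul_of_nonneg_right (hy_le m) (hd m r)
        · refine ⟨m₀, Finset.mem_univ _, ?_⟩
          have : y m₀ = x m₀ i / 2 := by simp [hy, hm₀B]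
          rw [this]; nlinarith
      linarith [hlt, hsum.le]
    · exact lt_of_le_of_lt (hyd_le r) (lt_of_le_of_ne (hcap i r) hsum)
  have hF : (Finset.univ.filter (fun r => 0 < d n r)).Nonempty := by
    obtain ⟨r, hr⟩ := hdpos n
    exact ⟨r, by simp [hr]⟩
  set F := Finset.univ.filter (fun r => 0 < d n r) with hFdef
  set ε := F.inf' hF (fun r => (c i r - ∑ m, y m * d m r) / d n r) with hε
  have hεpos : 0 < ε := by
    rw [hε, Finset.lt_inf'_iff]
    intro r hr
    have hr' : 0 < d n r := (Finset.mem_filter.mp hr).2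
    exact div_pos (by linarith [hkey r hr']) hr'
  set x' : N → K → ℝ := fun m j =>
    if j = i then (if m = n then x n i + ε else y m) else x m j with hx'
  have hx'i : ∀ m, x' m i = y m + (if m = n then ε else 0) := by
    intro m
    simp only [hx', if_pos rfl]
    by_cases hm : m = n
    · subst hm; simp [hy, hnB]
    · simp [hm]
  have hsumi : ∀ r, ∑ m, x' m i * d m r = (∑ m, y m * d m r) + ε * d n r := by
    intro r
    rw [Finset.sum_congr rfl (fun m _ => by rw [hx'i m, add_mul]), Finset.sum_add_distrib]
    congr 1
    rw [Finset.sum_congr rfl (fun m _ => by rw [ite_mul, zero_mul]), Finset.sum_ite_eq']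
    simp
  have hfeas : RDMFeasible c d γ x' := by
    refine ⟨?_, ?_, ?_⟩
    · intro m j
      simp only [hx']
      split
      · split
        · linarith [hx0 n i]
        · exact hy_nonneg m
      · exact hx0 m j
    · intro m j hγ0
      simp only [hx']
      split
      · rename_i hj
        rw [hj] at hγ0
        split
        · rename_i hm
          rw [hm] at hγ0
          exact absurd hγ0 (ne_of_gt hγni)
        · have : x m i = 0 := hxel m i hγ0
          simp [hy, this]
      · exact hxel m j hγ0
    · intro j r
      by_cases hj : j = i
      · rw [hj, hsumi r]
        by_cases hr : 0 < d n r
        · have hrF : r ∈ F := by simp [hFdef, hr]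
          have hεr : ε ≤ (c i r - ∑ m, y m * d m r) / d n r := by
            rw [hε]; exact Finset.inf'_le _ hrF
          have h2 : ε * d n r ≤ c i r - ∑ m, y m * d m r := (le_div_iff₀ hr).mp hεr
          linarith
        · have hr0 : d n r = 0 := le_antisymm (not_lt.mp hr) (hd n r)
          rw [hr0, mul_zero, add_zero]
          exact le_trans (hyd_le r) (hcap i r)
      · simp only [hx', if_neg hj]
        exact hcap j r
  have htot : ∑ j, x n j < ∑ j, x' n j := by
    have h1 : ∀ j, x' n j = x n j + (if j = i then ε else 0) := by
      intro j
      simp only [hx']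
      by_cases hj : j = i
      · subst hj; simp
      · simp [hj]
    rw [Finset.sum_congr rfl (fun j _ => h1 j), Finset.sum_add_distrib,
      Finset.sum_ite_eq']
    simp [hεpos]
  obtain ⟨m, i', hlt, _, _, hle⟩ := hps x' hfeas n htot
  have hii : i' = i := by
    by_contra h
    have : x' m i' = x m i' := by simp [hx', h]
    linarith
  rw [hii] at hlt hle
  have hmn : m ≠ n := by
    intro h; subst h
    have : x' m i = x m i + ε := by simp [hx']
    linarith
  have hmB : m ∈ B := by
    by_contra h
    have : x' m i = x m i := by simp [hx', hmn, hy, h]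
    linarith
  have hmB' := (Finset.mem_filter.mp hmB).2
  linarith
end

section
/- Under PS-DSF with TDM, an allocation is PS-DSF-optimal if and only if (a) Σ_n x_{n,i}/γ_{n,i} = 1 for every server i (with at least one eligible user), and (b) for all users n, m and each server i: if x_{m,i} > 0 then s_{n,i}/φ_n ≥ s_{m,i}/φ_m. -/
/-- TDM feasibility: nonnegative allocation, no tasks on ineligible servers
(`γ n i = 0`), and each server time-shared: `∑_n x_{n,i}/γ_{n,i} ≤ 1`. -/
def TDMFeasible {N K : Type*} [Fintype N]
    (γ : N → K → ℝ) (x : N → K → ℝ) : Prop :=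
  (∀ n i, 0 ≤ x n i) ∧ (∀ n i, γ n i = 0 → x n i = 0) ∧
    ∀ i, ∑ n, x n i / γ n i ≤ 1

/-- PS-DSF under TDM: `x` is feasible and no user's total task count can be increased,
maintaining TDM feasibility, without decreasing `x m i` for some user `m` and (eligible)
server `i` with `s_{m,i}/φ_m ≤ s_{n,i}/φ_n`. -/
def PSDSF_TDM {N K : Type*} [Fintype N] [Fintype K]
    (γ : N → K → ℝ) (φ : N → ℝ) (x : N → K → ℝ) : Prop :=
  TDMFeasible γ x ∧ ∀ x' : N → K → ℝ, TDMFeasible γ x' → ∀ n : N,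
    (∑ i, x n i) < (∑ i, x' n i) →
      ∃ m i, x' m i < x m i ∧ 0 < γ m i ∧ 0 < γ n i ∧
        vds γ x m i / φ m ≤ vds γ x n i / φ n

/-- Theorem 2: a TDM-feasible allocation satisfies PS-DSF iff (a) the TDM constraint holds
with equality at every server with an eligible user, and (b) whenever `x_{m,i} > 0`,
user `m` has minimal weighted VDS at server `i` among users eligible there. -/
theorem psdsf_tdm_characterization
    {N K : Type*} [Fintype N] [Fintype K]
    (γ : N → K → ℝ) (hγ : ∀ n i, 0 ≤ γ n i)
    (φ : N → ℝ) (hφ : ∀ n, 0 < φ n)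
    (x : N → K → ℝ) (hfeas : TDMFeasible γ x) :
    PSDSF_TDM γ φ x ↔
      ((∀ i : K, (∃ n, 0 < γ n i) → ∑ n, x n i / γ n i = 1) ∧
       (∀ n m : N, ∀ i : K, 0 < γ n i → 0 < x m i →
          vds γ x m i / φ m ≤ vds γ x n i / φ n)) := by
  classical
  obtain ⟨hx0, hxz, hxle⟩ := hfeas
  constructor
  · rintro ⟨-, hps⟩
    constructor
    · -- (a)
      rintro i ⟨n, hni⟩
      by_contra hne
      have hS : ∑ p, x p i / γ p i < 1 := lt_of_le_of_ne (hxle i) hne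
      set c : ℝ := (1 - ∑ p, x p i / γ p i) * γ n i with hc
      have hcpos : 0 < c := mul_pos (by linarith) hni
      set x' : N → K → ℝ := fun p j => x p j + if p = n ∧ j = i then c else 0 with hx'
      have hfeas' : TDMFeasible γ x' := by
        refine ⟨fun p j => ?_, fun p j hg => ?_, fun j => ?_⟩
        · simp only [hx']
          split_ifs with h
          · linarith [hx0 p j]
          · simpa using hx0 p j
        · simp only [hx']
          split_ifs with h
          · exact absurd hg (by rw [h.1, h.2]; exact ne_of_gt hni)
          · simpa using hxz p j hg
        · by_cases hj : j = i
          · subst hj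
            have hsum : ∑ p, x' p j / γ p j
                = ∑ p, x p j / γ p j + c / γ n j := by
              have : ∀ p, x' p j / γ p j
                  = x p j / γ p j + (if p = n then c / γ n j else 0) := by
                intro p
                simp only [hx', and_true]
                split_ifs with h
                · subst h; rw [add_div]
                · simp
              rw [Finset.sum_congr rfl fun p _ => this p, Finset.sum_add_distrib,
                Finset.sum_ite_eq' Finset.univ n (fun _ => c / γ n j)]
              simp
            rw [hsum, hc]
            rw [mul_div_assoc, div_self (ne_of_gt hni)]
            linarith
          · have : ∀ p, x' p j = x p j := by
              intro p; simp [hx', hj]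
            rw [Finset.sum_congr rfl fun p _ => by rw [this p]]
            exact hxle j
      have hlt : ∑ j, x n j < ∑ j, x' n j := by
        have : ∑ j, x' n j = ∑ j, x n j + c := by
          simp only [hx', true_and, Finset.sum_add_distrib,
            Finset.sum_ite_eq' Finset.univ i (fun _ => c)]
          simp
        rw [this]; linarith
      obtain ⟨m, i', hdec, -⟩ := hps x' hfeas' n hlt
      have hge : x m i' ≤ x' m i' := by
        simp only [hx']
        split_ifs with h
        · linarith
        · simp
      linarith
    · -- (b)
      intro n m i hni hxmi
      by_cases hnm : n = m
      · subst hnm; exact le_rfl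
      by_contra hlt'
      push_neg at hlt'
      have hmi : 0 < γ m i := by
        rcases (hγ m i).lt_or_eq with h | h
        · exact h
        · exact absurd (hxz m i h.symm) (by linarith)
      set a : ℝ := x m i * γ n i / γ m i with ha
      have hapos : 0 < a := div_pos (mul_pos hxmi hni) hmi
      set x' : N → K → ℝ := fun p j =>
        x p j + (if p = n ∧ j = i then a else 0) - (if p = m ∧ j = i then x m i else 0)
        with hx'
      have hkey : a / γ n i = x m i / γ m i := by
        rw [ha]; field_simp
      have hfeas' : TDMFeasible γ x' := by
        refine ⟨fun p j => ?_, fun p j hg => ?_, fun j => ?_⟩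
        · simp only [hx']
          split_ifs with h1 h2 h3
          · exact absurd (h1.1.symm.trans h2.1) hnm
          · linarith [hx0 p j]
          · rw [h3.1, h3.2]; simp
          · simpa using hx0 p j
        · simp only [hx']
          split_ifs with h1 h2 h3
          · exact absurd (h1.1.symm.trans h2.1) hnm
          · exact absurd hg (by rw [h1.1, h1.2]; exact ne_of_gt hni)
          · exact absurd hg (by rw [h3.1, h3.2]; exact ne_of_gt hmi)
          · simpa using hxz p j hg
        · by_cases hj : j = i
          · subst hj
            have hsum : ∑ p, x' p j / γ p j
                = ∑ p, x p j / γ p j + a / γ n j - x m j / γ m j := by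
              have : ∀ p, x' p j / γ p j
                  = x p j / γ p j + (if p = n then a / γ n j else 0)
                    - (if p = m then x m j / γ m j else 0) := by
                intro p
                simp only [hx', and_true]
                split_ifs with h1 h2 h3
                · exact absurd (h1.symm.trans h2) hnm
                · subst h1; rw [sub_zero, sub_zero, add_div]
                · subst h3; simp [sub_div]
                · simp
              rw [Finset.sum_congr rfl fun p _ => this p]
              rw [Finset.sum_sub_distrib, Finset.sum_add_distrib,
                Finset.sum_ite_eq' Finset.univ n (fun _ => a / γ n j),
                Finset.sum_ite_eq' Finset.univ m (fun _ => x m j / γ m j)]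
              simp
            rw [hsum, hkey]
            have := hxle j
            linarith
          · have : ∀ p, x' p j = x p j := by
              intro p; simp [hx', hj]
            rw [Finset.sum_congr rfl fun p _ => by rw [this p]]
            exact hxle j
      have hlt : ∑ j, x n j < ∑ j, x' n j := by
        have : ∑ j, x' n j = ∑ j, x n j + a := by
          simp only [hx', true_and]
          have hne : ¬ (n = m) := hnm
          simp only [hne, false_and, if_false, sub_zero]
          rw [Finset.sum_add_distrib, Finset.sum_ite_eq' Finset.univ i (fun _ => a)]
          simp
        rw [this]; linarith
      obtain ⟨m', i', hdec, hgm', hgn', hvds⟩ := hps x' hfeas' n hlt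
      have heq : m' = m ∧ i' = i := by
        by_contra hcon
        have hge : x m' i' ≤ x' m' i' := by
          simp only [hx']
          rw [if_neg hcon, sub_zero]
          split_ifs with h1
          · linarith
          · simp
        linarith
      rw [heq.1, heq.2] at hvds
      linarith
  · rintro ⟨ha, hb⟩
    refine ⟨⟨hx0, hxz, hxle⟩, ?_⟩
    intro x' hfeas' n hlt
    obtain ⟨hx'0, hx'z, hx'le⟩ := hfeas'
    obtain ⟨i, hi⟩ : ∃ i, x n i < x' n i := by
      by_contra h
      push_neg at h
      exact absurd (Finset.sum_le_sum fun i _ => h i) (not_le.2 hlt)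
    have hgn : 0 < γ n i := by
      rcases (hγ n i).lt_or_eq with h | h
      · exact h
      · exact absurd hi (by rw [hxz n i h.symm, hx'z n i h.symm]; exact lt_irrefl 0)
    have hsum : ∑ p, x p i / γ p i = 1 := ha i ⟨n, hgn⟩
    obtain ⟨m, hm⟩ : ∃ m, x' m i / γ m i < x m i / γ m i := by
      by_contra h
      push_neg at h
      have hstrict : ∑ p, x p i / γ p i < ∑ p, x' p i / γ p i :=
        Finset.sum_lt_sum (fun p _ => h p)
          ⟨n, Finset.mem_univ n, by gcongr⟩
      have := hx'le i
      linarith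
    have hgm : 0 < γ m i := by
      rcases (hγ m i).lt_or_eq with h | h
      · exact h
      · rw [← h] at hm; simp at hm
    have hxm : x' m i < x m i := by
      by_contra h
      push_neg at h
      exact absurd hm (not_lt.2 (by gcongr))
    have hxmpos : 0 < x m i := lt_of_le_of_lt (hx'0 m i) hxm
    exact ⟨m, i, hxm, hgm, hgn, hb n m i hgn hxmpos⟩
end

section
/- (Single resource fairness) When there is only one resource type, a PS-DSF allocation (RDM) yields total allocations a_n = x_n d_{n,1} that satisfy constrained weighted max-min fairness: a_n/φ_n cannot be increased while maintaining feasibility without decreasing the allocation from some server to a user m with a_m/φ_m ≤ a_n/φ_n. -/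
/-- Single-resource feasibility: nonnegative, nothing on ineligible servers,
capacity respected on each server. -/
def Feasible1 {N K : Type*} [Fintype N]
    (c : K → ℝ) (d : N → ℝ) (δ : N → K → Bool) (x : N → K → ℝ) : Prop :=
  (∀ n i, 0 ≤ x n i) ∧ (∀ n i, δ n i = false → x n i = 0) ∧
    ∀ i, ∑ n, x n i * d n ≤ c i

/-- Single resource fairness: with one resource type, a PS-DSF (RDM) allocation yields
total allocations `a_n = x_n d_n` satisfying constrained weighted max-min fairness:
`a_n/φ_n` cannot be increased, maintaining feasibility, without decreasing the
allocation from some server to a user `m` with `a_m/φ_m ≤ a_n/φ_n`. -/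
theorem single_resource_fairness
    {N K : Type*} [Fintype N] [Fintype K]
    (c : K → ℝ) (hc : ∀ i, 0 < c i)
    (d : N → ℝ) (hd : ∀ n, 0 < d n)
    (φ : N → ℝ) (hφ : ∀ n, 0 < φ n)
    (δ : N → K → Bool)
    (γ : N → K → ℝ) (hγ : ∀ n i, γ n i = if δ n i then c i / d n else 0)
    (x : N → K → ℝ)
    -- `x` satisfies PS-DSF:
    (hfeas : Feasible1 c d δ x)
    (hpsdsf : ∀ x' : N → K → ℝ, Feasible1 c d δ x' → ∀ n : N,
      (∑ i, x n i) < (∑ i, x' n i) →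
        ∃ m i, x' m i < x m i ∧ 0 < γ m i ∧ 0 < γ n i ∧
          ((∑ j, x m j) / γ m i) / φ m ≤ ((∑ j, x n j) / γ n i) / φ n) :
    -- constrained weighted max-min fairness of the totals `a_n = x_n d_n`:
    ∀ x' : N → K → ℝ, Feasible1 c d δ x' → ∀ n : N,
      ((∑ i, x n i) * d n) / φ n < ((∑ i, x' n i) * d n) / φ n →
        ∃ m i, x' m i < x m i ∧
          ((∑ j, x m j) * d m) / φ m ≤ ((∑ j, x n j) * d n) / φ n := by
  intro x' hx' n hlt
  have hsum : (∑ i, x n i) < (∑ i, x' n i) := by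
    have h1 := (div_lt_div_iff_of_pos_right (hφ n)).mp hlt
    exact lt_of_mul_lt_mul_right h1 (hd n).le
  obtain ⟨m, i, hxi, hγm, hγn, hle⟩ := hpsdsf x' hx' n hsum
  refine ⟨m, i, hxi, ?_⟩
  have hδm : δ m i = true := by
    by_contra h
    simp [hγ m i, eq_false_of_ne_true h] at hγm
  have hδn : δ n i = true := by
    by_contra h
    simp [hγ n i, eq_false_of_ne_true h] at hγn
  rw [hγ m i, hγ n i, hδm, hδn] at hle
  simp only [if_true] at hle
  rw [div_div_eq_mul_div, div_div_eq_mul_div, div_right_comm, div_right_comm _ (c i)] at hle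
  exact (div_le_div_iff_of_pos_right (hc i)).mp hle
end

section
/- (Bottleneck fairness) If there is a resource r* that is the dominant resource of every user with respect to every eligible server, then under a PS-DSF allocation the total allocated amounts of r*, a_{n,r*} = x_n d_{n,r*}, satisfy constrained weighted max-min fairness in r*. -/
/-- Bottleneck fairness: if some resource `r*` is the dominant resource of every user
w.r.t. every eligible server, then under a PS-DSF (RDM) allocation the total allocated
amounts of `r*`, `a_{n,r*} = x_n d_{n,r*}`, satisfy constrained weighted max-min
fairness in `r*`. -/
theorem bottleneck_fairness
    {N K R : Type*} [Fintype N] [Fintype K] [Fintype R]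
    (c : K → R → ℝ) (hc : ∀ i r, 0 < c i r)
    (d : N → R → ℝ) (hd : ∀ n r, 0 ≤ d n r)
    (φ : N → ℝ) (hφ : ∀ n, 0 < φ n)
    (γ : N → K → ℝ)
    (rstar : R)
    (hdom : ∀ n i, 0 < γ n i →
      0 < d n rstar ∧ γ n i = c i rstar / d n rstar ∧
        ∀ r, d n r / c i r ≤ d n rstar / c i rstar)
    (x : N → K → ℝ)
    (hpsdsf : PSDSF_RDM c d γ φ x) :
    ∀ x' : N → K → ℝ, RDMFeasible c d γ x' → ∀ n : N,
      ((∑ i, x n i) * d n rstar) / φ n < ((∑ i, x' n i) * d n rstar) / φ n →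
        ∃ m i, x' m i < x m i ∧
          ((∑ j, x m j) * d m rstar) / φ m ≤ ((∑ j, x n j) * d n rstar) / φ n := by
  intro x' hx' n hlt
  have hφn := hφ n
  have h1 : (∑ i, x n i) * d n rstar < (∑ i, x' n i) * d n rstar :=
    (div_lt_div_iff_of_pos_right hφn).mp hlt
  have hdn : 0 < d n rstar := by
    rcases lt_or_eq_of_le (hd n rstar) with h | h
    · exact h
    · exfalso; rw [← h] at h1; simp at h1
  have hsum : (∑ i, x n i) < (∑ i, x' n i) := lt_of_mul_lt_mul_right h1 hdn.le
  obtain ⟨m, i, hxi, hγm, hγn, hvds⟩ := hpsdsf.2 x' hx' n hsum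
  obtain ⟨hdm, hγmeq, -⟩ := hdom m i hγm
  obtain ⟨hdn', hγneq, -⟩ := hdom n i hγn
  refine ⟨m, i, hxi, ?_⟩
  have hC := hc i rstar
  rw [vds, vds, hγmeq, hγneq, div_div_eq_mul_div, div_div_eq_mul_div,
    div_div, div_div, mul_comm (c i rstar) (φ m), mul_comm (c i rstar) (φ n),
    ← div_div, ← div_div] at hvds
  exact (div_le_div_iff_of_pos_right hC).mp hvds
end

section
/- Under TDM, if x_{n,i} > 0 and x_{m,j} > 0 in a PS-DSF allocation, then any feasible exchange that keeps Σ x/γ = 1 at servers i and j (Δx_{n,j} = −Δx_{m,j}·γ_{n,j}/γ_{m,j}, Δx_{m,i} = −Δx_{n,i}·γ_{m,i}/γ_{n,i}) and strictly increases user n's total tasks (Δx_{n,i} + Δx_{n,j} > 0) must strictly decrease user m's total tasks (Δx_{m,i} + Δx_{m,j} < 0). -/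
/-! The PS-DSF inequalities say that the two exchange rates `γmi / γni` (server `i`) and
`γnj / γmj` (server `j`) multiply to at most `1`. User `n` gains `-Δmj · γnj / γmj` at `j`
and loses `-Δni` at `i`; a net gain means `-Δni < -Δmj · γnj / γmj`. Scaling by `γmi / γni`,
user `m` gains `-Δni · γmi / γni < -Δmj` at `i`, which is less than what it gives up at `j`. -/

lemma mul_le_one_of_le_inv_of_le {r s k : ℝ} (hr : 0 < r) (hrk : r ≤ k⁻¹) (hs : s ≤ k) :
    r * s ≤ 1 := by
  have hk : 0 < k := inv_pos.mp (hr.trans_le hrk)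
  calc r * s ≤ r * k := mul_le_mul_of_nonneg_left hs hr.le
    _ ≤ k⁻¹ * k := mul_le_mul_of_nonneg_right hrk hk.le
    _ = 1 := inv_mul_cancel₀ hk.ne'

lemma mul_lt_of_lt_mul_of_mul_le_one {a b r s : ℝ} (hr : 0 < r) (hb : 0 ≤ b) (hrs : r * s ≤ 1)
    (h : a < b * s) : a * r < b :=
  calc a * r < b * s * r := mul_lt_mul_of_pos_right h hr
    _ = b * (r * s) := by ring
    _ ≤ b := mul_le_of_le_one_right hb hrs

theorem tdm_exchange_decreases_other_general
    (γni γnj γmi γmj φn φm xn xm : ℝ)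
    (hγni : 0 < γni) (hγmi : 0 < γmi)
    (h1 : γmi / γni ≤ (φn / φm) * (xm / xn))
    (h2 : γnj / γmj ≤ (φm / φn) * (xn / xm))
    (Δni Δnj Δmi Δmj : ℝ)
    (hΔmj : Δmj ≤ 0)
    (hj : Δnj = -Δmj * (γnj / γmj))
    (hi : Δmi = -Δni * (γmi / γni))
    (hinc : 0 < Δni + Δnj) :
    Δmi + Δmj < 0 := by
  have hinv : (φn / φm) * (xm / xn) = ((φm / φn) * (xn / xm))⁻¹ := by
    rw [mul_inv, inv_div, inv_div]
  have hrate : 0 < γmi / γni := div_pos hγmi hγni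
  have hrates : γmi / γni * (γnj / γmj) ≤ 1 :=
    mul_le_one_of_le_inv_of_le hrate (hinv ▸ h1) h2
  have hgain_n : -Δni < -Δmj * (γnj / γmj) := by linarith
  have hgain_m : -Δni * (γmi / γni) < -Δmj :=
    mul_lt_of_lt_mul_of_mul_le_one hrate (neg_nonneg.mpr hΔmj) hrates hgain_n
  linarith

/-- Exchange lemma under TDM: if `x_{n,i} > 0` and `x_{m,j} > 0` in a PS-DSF allocation
(so that `γ_{m,i}/γ_{n,i} ≤ (φ_n/φ_m)(x_m/x_n)` and
`γ_{n,j}/γ_{m,j} ≤ (φ_m/φ_n)(x_n/x_m)`), then any feasible exchange of (parts of) their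
allocations between servers `i` and `j` keeping the TDM equalities
(`Δx_{n,j} = −Δx_{m,j}·γ_{n,j}/γ_{m,j}`, `Δx_{m,i} = −Δx_{n,i}·γ_{m,i}/γ_{n,i}`,
with `Δx_{n,i} ≤ 0`, `Δx_{m,j} ≤ 0`) that strictly increases user `n`'s total tasks
must strictly decrease user `m`'s total tasks. -/
theorem tdm_exchange_decreases_other
    (γni γnj γmi γmj φn φm xn xm : ℝ)
    (hγni : 0 < γni) (hγnj : 0 < γnj) (hγmi : 0 < γmi) (hγmj : 0 < γmj)
    (hφn : 0 < φn) (hφm : 0 < φm) (hxn : 0 < xn) (hxm : 0 < xm)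
    (h1 : γmi / γni ≤ (φn / φm) * (xm / xn))
    (h2 : γnj / γmj ≤ (φm / φn) * (xn / xm))
    (Δni Δnj Δmi Δmj : ℝ)
    (hΔni : Δni ≤ 0) (hΔmj : Δmj ≤ 0)
    (hj : Δnj = -Δmj * (γnj / γmj))
    (hi : Δmi = -Δni * (γmi / γni))
    (hinc : 0 < Δni + Δnj) :
    Δmi + Δmj < 0 :=
  tdm_exchange_decreases_other_general γni γnj γmi γmj φn φm xn xm hγni hγmi h1 h2 Δni Δnj Δmi Δmj
    hΔmj hj hi hinc
end

section
/- (Pareto optimality under TDM) A PS-DSF allocation based on TDM is Pareto optimal: there is no other TDM-feasible allocation x' with x'_n ≥ x_n for all users n and x'_m > x_m for some user m. -/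
section Aux

variable {N K : Type*} [Fintype N] [Fintype K]

/-- Step A: under PS-DSF every server with an eligible user is fully time-shared. -/
lemma psdsf_tight (γ : N → K → ℝ) (hγ : ∀ n i, 0 ≤ γ n i)
    (φ : N → ℝ) (x : N → K → ℝ)
    (hpsdsf : PSDSF_TDM γ φ x) (i : K) (n : N) (hni : 0 < γ n i) :
    ∑ m, x m i / γ m i = 1 := by
  classical
  obtain ⟨⟨hx0, hxz, hxc⟩, hp⟩ := hpsdsf
  by_contra h
  have hlt : ∑ m, x m i / γ m i < 1 := lt_of_le_of_ne (hxc i) h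
  set s : ℝ := 1 - ∑ m, x m i / γ m i with hs
  have hs0 : 0 < s := by simp only [hs]; linarith
  set x' : N → K → ℝ :=
    fun m j => x m j + (if m = n ∧ j = i then γ n i * s else 0) with hx'
  have hxle : ∀ m j, x m j ≤ x' m j := by
    intro m j
    simp only [hx']
    have : (0:ℝ) ≤ (if m = n ∧ j = i then γ n i * s else 0) := by
      split_ifs
      · positivity
      · exact le_rfl
    linarith
  have hfeas : TDMFeasible γ x' := by
    refine ⟨?_, ?_, ?_⟩
    · intro m j; exact le_trans (hx0 m j) (hxle m j)
    · intro m j hzero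
      simp only [hx']
      rcases Decidable.em (m = n ∧ j = i) with ⟨rfl, rfl⟩ | hcond
      · exact absurd hzero (ne_of_gt hni)
      · simp [hcond, hxz m j hzero]
    · intro j
      rcases Decidable.em (j = i) with rfl | hji
      · have hsum : ∑ m, x' m j / γ m j
            = (∑ m, x m j / γ m j) + ∑ m, (if m = n then γ n j * s else 0) / γ m j := by
          rw [← Finset.sum_add_distrib]
          refine Finset.sum_congr rfl fun m _ => ?_
          simp only [hx', and_true]
          rw [add_div]
        have hsingle : ∑ m, (if m = n then γ n j * s else 0) / γ m j = s := by
          rw [Finset.sum_eq_single n]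
          · rw [if_pos rfl, mul_comm, mul_div_assoc, div_self (ne_of_gt hni), mul_one]
          · intro b _ hb; simp [hb]
          · intro hn; exact absurd (Finset.mem_univ n) hn
        rw [hsum, hsingle]
        linarith
      · have : ∑ m, x' m j / γ m j = ∑ m, x m j / γ m j := by
          refine Finset.sum_congr rfl fun m _ => ?_
          simp [hx', hji]
        rw [this]; exact hxc j
  have hinc : (∑ j, x n j) < ∑ j, x' n j := by
    have : ∑ j, x' n j = (∑ j, x n j) + ∑ j, (if j = i then γ n i * s else 0) := by
      simp only [hx', true_and]
      rw [← Finset.sum_add_distrib]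
    rw [this, Finset.sum_ite_eq' Finset.univ i (fun _ => γ n i * s)]
    simp only [Finset.mem_univ, if_true]
    nlinarith
  obtain ⟨m, j, hmj, -⟩ := hp x' hfeas n hinc
  exact absurd hmj (not_lt.mpr (hxle m j))

/-- Step B: under PS-DSF, a positively-allocated user at a server has minimal
weighted VDS among all users eligible at that server. -/
lemma psdsf_vds_min (γ : N → K → ℝ) (hγ : ∀ n i, 0 ≤ γ n i)
    (φ : N → ℝ) (hφ : ∀ n, 0 < φ n) (x : N → K → ℝ)
    (hpsdsf : PSDSF_TDM γ φ x) (m : N) (i : K) (n : N)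
    (hxm : 0 < x m i) (hni : 0 < γ n i) :
    vds γ x m i / φ m ≤ vds γ x n i / φ n := by
  classical
  rcases eq_or_ne n m with rfl | hne
  · exact le_rfl
  obtain ⟨⟨hx0, hxz, hxc⟩, hp⟩ := hpsdsf
  by_contra hcon
  push_neg at hcon
  have hmi : 0 < γ m i := by
    rcases lt_or_eq_of_le (hγ m i) with h | h
    · exact h
    · exact absurd (hxz m i h.symm) (ne_of_gt hxm)
  set b : ℝ := x m i * γ n i / γ m i with hb
  have hb0 : 0 < b := by positivity
  set x' : N → K → ℝ := fun k j =>
    x k j + (if k = n ∧ j = i then b else 0) - (if k = m ∧ j = i then x m i else 0)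
    with hx'
  have hxval : ∀ k j, ¬(k = m ∧ j = i) → x k j ≤ x' k j := by
    intro k j hk
    simp only [hx', if_neg hk, sub_zero]
    split_ifs
    · linarith
    · simp
  have hfeas : TDMFeasible γ x' := by
    refine ⟨?_, ?_, ?_⟩
    · intro k j
      rcases Decidable.em (k = m ∧ j = i) with hk | hk
      · have hfalse : ¬(k = n ∧ j = i) := by
          rintro ⟨h1, -⟩
          apply hne
          rw [← h1]; exact hk.1
        obtain ⟨hk1, hk2⟩ := hk
        subst hk1; subst hk2
        simp [hx', hfalse, Ne.symm hne]
      · exact le_trans (hx0 k j) (hxval k j hk)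
    · intro k j hzero
      rcases Decidable.em (k = m ∧ j = i) with ⟨rfl, rfl⟩ | hk
      · exact absurd hzero (ne_of_gt hmi)
      · rcases Decidable.em (k = n ∧ j = i) with ⟨rfl, rfl⟩ | hk2
        · exact absurd hzero (ne_of_gt hni)
        · simp [hx', hk, hk2, hxz k j hzero]
    · intro j
      rcases Decidable.em (j = i) with rfl | hji
      · have hsum : ∑ k, x' k j / γ k j
            = (∑ k, x k j / γ k j)
              + (∑ k, (if k = n then b else 0) / γ k j)
              - (∑ k, (if k = m then x m j else 0) / γ k j) := by
          rw [← Finset.sum_add_distrib, ← Finset.sum_sub_distrib]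
          refine Finset.sum_congr rfl fun k _ => ?_
          simp only [hx', and_true]
          rw [sub_div, add_div]
        have h1 : ∑ k, (if k = n then b else 0) / γ k j = b / γ n j := by
          rw [Finset.sum_eq_single n]
          · rw [if_pos rfl]
          · intro c _ hc; simp [hc]
          · intro hn; exact absurd (Finset.mem_univ n) hn
        have h2 : ∑ k, (if k = m then x m j else 0) / γ k j = x m j / γ m j := by
          rw [Finset.sum_eq_single m]
          · rw [if_pos rfl]
          · intro c _ hc; simp [hc]
          · intro hn; exact absurd (Finset.mem_univ m) hn
        have hbg : b / γ n j = x m j / γ m j := by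
          rw [hb]
          field_simp
        rw [hsum, h1, h2, hbg]
        have := hxc j
        linarith
      · have : ∑ k, x' k j / γ k j = ∑ k, x k j / γ k j := by
          refine Finset.sum_congr rfl fun k _ => ?_
          simp [hx', hji]
        rw [this]; exact hxc j
  have hinc : (∑ j, x n j) < ∑ j, x' n j := by
    have hmne : ∀ j : K, ¬(n = m ∧ j = i) := by rintro j ⟨rfl, -⟩; exact hne rfl
    have : ∑ j, x' n j = (∑ j, x n j) + ∑ j, (if j = i then b else 0) := by
      rw [← Finset.sum_add_distrib]
      refine Finset.sum_congr rfl fun j _ => ?_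
      simp [hx', hmne j, true_and]
    rw [this, Finset.sum_ite_eq' Finset.univ i (fun _ => b)]
    simp only [Finset.mem_univ, if_true]
    linarith
  obtain ⟨m', j, hlt', -, -, hv⟩ := hp x' hfeas n hinc
  have hmj : m' = m ∧ j = i := by
    by_contra hk
    exact absurd hlt' (not_lt.mpr (hxval m' j hk))
  obtain ⟨rfl, rfl⟩ := hmj
  exact absurd hv (not_le.mpr hcon)

/-- Step C: under PS-DSF, every user eligible at some server has positive total. -/
lemma psdsf_total_pos (γ : N → K → ℝ) (hγ : ∀ n i, 0 ≤ γ n i)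
    (φ : N → ℝ) (hφ : ∀ n, 0 < φ n) (x : N → K → ℝ)
    (hpsdsf : PSDSF_TDM γ φ x) (n : N) (i : K) (hni : 0 < γ n i) :
    0 < ∑ j, x n j := by
  have htight := psdsf_tight γ hγ φ x hpsdsf i n hni
  have hx0 := hpsdsf.1.1
  have hxz := hpsdsf.1.2.1
  have hex : ∃ m, 0 < x m i := by
    by_contra hall
    push_neg at hall
    have : ∑ m, x m i / γ m i = 0 := by
      apply Finset.sum_eq_zero
      intro m _
      have : x m i = 0 := le_antisymm (hall m) (hx0 m i)
      simp [this]
    rw [this] at htight; norm_num at htight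
  obtain ⟨m, hm⟩ := hex
  have hmi : 0 < γ m i := by
    rcases lt_or_eq_of_le (hγ m i) with h | h
    · exact h
    · exact absurd (hxz m i h.symm) (ne_of_gt hm)
  have hv := psdsf_vds_min γ hγ φ hφ x hpsdsf m i n hm hni
  have hTm : 0 < ∑ j, x m j :=
    lt_of_lt_of_le hm (Finset.single_le_sum (fun j _ => hx0 m j) (Finset.mem_univ i))
  have hvm : 0 < vds γ x m i / φ m := by
    unfold vds; exact div_pos (div_pos hTm hmi) (hφ m)
  have hvn : 0 < vds γ x n i / φ n := lt_of_lt_of_le hvm hv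
  unfold vds at hvn
  rcases div_pos_iff.mp hvn with ⟨h1, -⟩ | ⟨-, h2⟩
  · rcases div_pos_iff.mp h1 with ⟨h3, -⟩ | ⟨-, h4⟩
    · exact h3
    · exact absurd h4 (not_lt.mpr (le_of_lt hni))
  · exact absurd h2 (not_lt.mpr (le_of_lt (hφ n)))

end Aux

/-- Pareto optimality under TDM: a PS-DSF allocation based on TDM is Pareto optimal—
there is no other TDM-feasible allocation giving every user at least as many tasks
and some user strictly more. -/
theorem psdsf_tdm_pareto_optimal
    {N K : Type*} [Fintype N] [Fintype K]
    (γ : N → K → ℝ) (hγ : ∀ n i, 0 ≤ γ n i)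
    (φ : N → ℝ) (hφ : ∀ n, 0 < φ n)
    (x : N → K → ℝ)
    (hpsdsf : PSDSF_TDM γ φ x) :
    ¬ ∃ x' : N → K → ℝ, TDMFeasible γ x' ∧
        (∀ n : N, (∑ i, x n i) ≤ (∑ i, x' n i)) ∧
        (∃ m : N, (∑ i, x m i) < (∑ i, x' m i)) := by
  classical
  rintro ⟨y, ⟨hy0, hyz, hyc⟩, hge, m0, hm0⟩
  obtain ⟨⟨hx0, hxz, hxc⟩, -⟩ := id hpsdsf
  have hTnn : ∀ n : N, (0:ℝ) ≤ ∑ j, x n j :=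
    fun n => Finset.sum_nonneg fun j _ => hx0 n j
  -- the key per-server estimate
  have key : ∀ i : K,
      ∑ n, (φ n / ∑ j, x n j) * (y n i - x n i) ≤ 0 := by
    intro i
    by_cases hall : ∀ n, y n i = x n i
    · apply le_of_eq
      apply Finset.sum_eq_zero
      intro n _
      rw [hall n]; ring
    · push_neg at hall
      obtain ⟨n0, hn0⟩ := hall
      have hn0γ : 0 < γ n0 i := by
        rcases lt_or_eq_of_le (hγ n0 i) with h | h
        · exact h
        · exact absurd (by rw [hyz n0 i h.symm, hxz n0 i h.symm]) hn0
      have htight := psdsf_tight γ hγ φ x hpsdsf i n0 hn0γ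
      have hex : ∃ m, 0 < x m i := by
        by_contra hne
        push_neg at hne
        have : ∑ m, x m i / γ m i = 0 := by
          apply Finset.sum_eq_zero
          intro m _
          have : x m i = 0 := le_antisymm (hne m) (hx0 m i)
          simp [this]
        rw [this] at htight; norm_num at htight
      obtain ⟨ms, hms⟩ := hex
      have hmsγ : 0 < γ ms i := by
        rcases lt_or_eq_of_le (hγ ms i) with h | h
        · exact h
        · exact absurd (hxz ms i h.symm) (ne_of_gt hms)
      have hTms : 0 < ∑ j, x ms j :=
        lt_of_lt_of_le hms (Finset.single_le_sum (fun j _ => hx0 ms j) (Finset.mem_univ i))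
      set c : ℝ := vds γ x ms i / φ ms with hc
      have hc0 : 0 < c := by
        rw [hc]; unfold vds
        exact div_pos (div_pos hTms hmsγ) (hφ ms)
      have hub : ∀ n : N,
          (φ n / ∑ j, x n j) * (y n i - x n i)
            ≤ (1 / c) * (y n i / γ n i - x n i / γ n i) := by
        intro n
        rw [div_sub_div_same]
        rcases lt_trichotomy (y n i) (x n i) with hlt | heq | hgt
        · -- y n i < x n i : x n i > 0
          have hxn : 0 < x n i := lt_of_le_of_lt (hy0 n i) hlt
          have hγn : 0 < γ n i := by
            rcases lt_or_eq_of_le (hγ n i) with h | h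
            · exact h
            · exact absurd (hxz n i h.symm) (ne_of_gt hxn)
          have hTn : 0 < ∑ j, x n j :=
            lt_of_lt_of_le hxn (Finset.single_le_sum (fun j _ => hx0 n j) (Finset.mem_univ i))
          have hv := psdsf_vds_min γ hγ φ hφ x hpsdsf n i ms hxn hmsγ
          rw [← hc] at hv
          unfold vds at hv
          rw [div_div] at hv
          have h5 : (∑ j, x n j) ≤ c * (γ n i * φ n) :=
            (div_le_iff₀ (mul_pos hγn (hφ n))).mp hv
          have h6 : 1 / (c * γ n i) ≤ φ n / ∑ j, x n j := by
            rw [div_le_div_iff₀ (by positivity) hTn]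
            nlinarith
          have h7 := mul_le_mul_of_nonpos_right h6 (by linarith : y n i - x n i ≤ 0)
          have h8 : 1 / (c * γ n i) * (y n i - x n i)
              = 1 / c * ((y n i - x n i) / γ n i) := by
            field_simp
          linarith
        · rw [heq]; simp
        · -- x n i < y n i : y n i > 0
          have hyn : 0 < y n i := lt_of_le_of_lt (hx0 n i) hgt
          have hγn : 0 < γ n i := by
            rcases lt_or_eq_of_le (hγ n i) with h | h
            · exact h
            · exact absurd (hyz n i h.symm) (ne_of_gt hyn)
          have hTn : 0 < ∑ j, x n j := psdsf_total_pos γ hγ φ hφ x hpsdsf n i hγn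
          have hv := psdsf_vds_min γ hγ φ hφ x hpsdsf ms i n hms hγn
          rw [← hc] at hv
          unfold vds at hv
          rw [div_div] at hv
          have h5 : c * (γ n i * φ n) ≤ ∑ j, x n j :=
            (le_div_iff₀ (mul_pos hγn (hφ n))).mp hv
          have h6 : φ n / (∑ j, x n j) ≤ 1 / (c * γ n i) := by
            rw [div_le_div_iff₀ hTn (by positivity)]
            nlinarith
          have h7 := mul_le_mul_of_nonneg_right h6 (by linarith : 0 ≤ y n i - x n i)
          have h8 : 1 / (c * γ n i) * (y n i - x n i)
              = 1 / c * ((y n i - x n i) / γ n i) := by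
            field_simp
          linarith
      calc ∑ n, (φ n / ∑ j, x n j) * (y n i - x n i)
          ≤ ∑ n, (1 / c) * (y n i / γ n i - x n i / γ n i) :=
            Finset.sum_le_sum fun n _ => hub n
        _ = (1 / c) * ((∑ n, y n i / γ n i) - ∑ n, x n i / γ n i) := by
            rw [← Finset.sum_sub_distrib, Finset.mul_sum]
        _ ≤ 0 := by
            apply mul_nonpos_of_nonneg_of_nonpos
            · positivity
            · have := hyc i
              rw [htight]
              linarith
  -- sum the per-server estimates
  have h2 : ∑ n, (φ n / ∑ j, x n j) * ((∑ j, y n j) - ∑ j, x n j) ≤ 0 := by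
    have hswap : ∑ n, (φ n / ∑ j, x n j) * ((∑ j, y n j) - ∑ j, x n j)
        = ∑ i, ∑ n, (φ n / ∑ j, x n j) * (y n i - x n i) := by
      rw [Finset.sum_comm]
      refine Finset.sum_congr rfl fun n _ => ?_
      rw [← Finset.mul_sum, Finset.sum_sub_distrib]
    rw [hswap]
    exact Finset.sum_nonpos fun i _ => key i
  -- but the weighted improvement is strictly positive
  have hTm0 : 0 < ∑ j, x m0 j := by
    have hy' : 0 < ∑ j, y m0 j := lt_of_le_of_lt (hTnn m0) hm0
    have hex : ∃ i, 0 < y m0 i := by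
      by_contra hne
      push_neg at hne
      have : ∑ j, y m0 j = 0 :=
        Finset.sum_eq_zero fun j _ => le_antisymm (hne j) (hy0 m0 j)
      rw [this] at hy'; norm_num at hy'
    obtain ⟨i, hi⟩ := hex
    have hγi : 0 < γ m0 i := by
      rcases lt_or_eq_of_le (hγ m0 i) with h | h
      · exact h
      · exact absurd (hyz m0 i h.symm) (ne_of_gt hi)
    exact psdsf_total_pos γ hγ φ hφ x hpsdsf m0 i hγi
  have h1 : 0 < ∑ n, (φ n / ∑ j, x n j) * ((∑ j, y n j) - ∑ j, x n j) := by
    apply Finset.sum_pos'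
    · intro n _
      apply mul_nonneg
      · exact div_nonneg (le_of_lt (hφ n)) (hTnn n)
      · have := hge n; linarith
    · exact ⟨m0, Finset.mem_univ m0,
        mul_pos (div_pos (hφ m0) hTm0) (by linarith)⟩
  linarith
end

section
/- (Two-user exchange improvement) If under a generic allocation two users n₀ and m have positive shares at servers j and i respectively with γ̂_{n₀,i}/γ̂_{m,i} > γ̂_{n₀,j}/γ̂_{m,j}, then there exists an exchange of (parts of) their allocations between servers i and j that strictly increases the number of tasks of both users while preserving TDM feasibility at both servers. -/
lemma exchange_sum_aux {K : Type*} [Fintype K] [DecidableEq K] {i j : K} (hij : i ≠ j)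
    (θ f : K → ℝ) (a b : ℝ) :
    ∑ k, (if k = i then θ i + a else if k = j then θ j + b else θ k) * f k
      = (∑ k, θ k * f k) + (a * f i + b * f j) := by
  have hpt : ∀ k, (if k = i then θ i + a else if k = j then θ j + b else θ k) * f k
      = θ k * f k + ((if k = i then a * f i else 0) + (if k = j then b * f j else 0)) := by
    intro k
    by_cases h1 : k = i
    · have h2 : k ≠ j := by rw [h1]; exact hij
      rw [if_pos h1, if_pos h1, if_neg h2, h1]; ring
    · by_cases h2 : k = j
      · rw [if_neg h1, if_neg h1, if_pos h2, if_pos h2, h2]; ring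
      · rw [if_neg h1, if_neg h1, if_neg h2, if_neg h2]; ring
  rw [Finset.sum_congr rfl fun k _ => hpt k, Finset.sum_add_distrib, Finset.sum_add_distrib,
    Finset.sum_ite_eq' Finset.univ i, Finset.sum_ite_eq' Finset.univ j]
  simp

/-- Two-user exchange improvement: if users `n₀` and `m` hold positive time-shares
`θ₀ j > 0` at server `j` and `θₘ i > 0` at server `i` respectively, and
`γ̂_{n₀,i}/γ̂_{m,i} > γ̂_{n₀,j}/γ̂_{m,j}`, then moving `ε > 0` of `n₀`'s share on `j` to `m`
and `δ > 0` of `m`'s share on `i` to `n₀` can strictly increase both users' total tasks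
while preserving the per-server time-share (TDM) feasibility at both servers. -/
theorem two_user_exchange_improvement
    {K : Type*} [Fintype K] [DecidableEq K]
    (g0 gm : K → ℝ) (hg0 : ∀ k, 0 < g0 k) (hgm : ∀ k, 0 < gm k)
    (i j : K) (hij : i ≠ j)
    (θ0 θm : K → ℝ) (hθ0 : ∀ k, 0 ≤ θ0 k) (hθm : ∀ k, 0 ≤ θm k)
    (hcap : ∀ k, θ0 k + θm k ≤ 1)
    (h0j : 0 < θ0 j) (hmi : 0 < θm i)
    (hratio : g0 j / gm j < g0 i / gm i) :
    ∃ ε δ : ℝ, 0 < ε ∧ 0 < δ ∧ ε ≤ θ0 j ∧ δ ≤ θm i ∧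
      (∀ k, (if k = i then θ0 i + δ else if k = j then θ0 j - ε else θ0 k)
          + (if k = i then θm i - δ else if k = j then θm j + ε else θm k) ≤ 1) ∧
      (∑ k, θ0 k * g0 k)
        < ∑ k, (if k = i then θ0 i + δ else if k = j then θ0 j - ε else θ0 k) * g0 k ∧
      (∑ k, θm k * gm k)
        < ∑ k, (if k = i then θm i - δ else if k = j then θm j + ε else θm k) * gm k := by
  have hg0i := hg0 i; have hg0j := hg0 j; have hgmi := hgm i; have hgmj := hgm j
  obtain ⟨r, hrdef⟩ : ∃ r : ℝ, r = (g0 j / g0 i + gm j / gm i) / 2 := ⟨_, rfl⟩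
  have h1 : g0 j / g0 i < gm j / gm i := by
    rw [div_lt_div_iff₀ hg0i hgmi]
    have h2 := (div_lt_div_iff₀ hgmj hgmi).mp hratio
    nlinarith
  have hr1 : g0 j / g0 i < r := by rw [hrdef]; linarith
  have hr2 : r < gm j / gm i := by rw [hrdef]; linarith
  have hrpos : 0 < r := lt_trans (div_pos hg0j hg0i) hr1
  obtain ⟨ε, hεdef⟩ : ∃ e : ℝ, e = min (θ0 j) (θm i / r) := ⟨_, rfl⟩
  have hεpos : 0 < ε := hεdef ▸ lt_min h0j (div_pos hmi hrpos)
  obtain ⟨δ, hδdef⟩ : ∃ d : ℝ, d = ε * r := ⟨_, rfl⟩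
  have hδpos : 0 < δ := hδdef ▸ mul_pos hεpos hrpos
  have hδle : δ ≤ θm i := by
    have h3 : ε ≤ θm i / r := hεdef ▸ min_le_right _ _
    rw [hδdef]
    exact (le_div_iff₀ hrpos).mp h3
  have key0 : g0 j < r * g0 i := (div_lt_iff₀ hg0i).mp hr1
  have keym : r * gm i < gm j := (lt_div_iff₀ hgmi).mp hr2
  have hεle : ε ≤ θ0 j := hεdef ▸ min_le_left _ _
  have hsum0 : ∑ k, (if k = i then θ0 i + δ else if k = j then θ0 j - ε else θ0 k) * g0 k
      = (∑ k, θ0 k * g0 k) + (δ * g0 i + (-ε) * g0 j) := by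
    rw [← exchange_sum_aux hij θ0 g0 δ (-ε)]
    apply Finset.sum_congr rfl
    intro k _
    split_ifs <;> ring
  have hsumm : ∑ k, (if k = i then θm i - δ else if k = j then θm j + ε else θm k) * gm k
      = (∑ k, θm k * gm k) + ((-δ) * gm i + ε * gm j) := by
    rw [← exchange_sum_aux hij θm gm (-δ) ε]
    apply Finset.sum_congr rfl
    intro k _
    split_ifs <;> ring
  refine ⟨ε, δ, hεpos, hδpos, hεle, hδle, ?_, ?_, ?_⟩
  · intro k
    by_cases h1 : k = i
    · rw [if_pos h1, if_pos h1]
      have := hcap i; linarith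
    · by_cases h2 : k = j
      · rw [if_neg h1, if_neg h1, if_pos h2, if_pos h2]
        have := hcap j; linarith
      · rw [if_neg h1, if_neg h1, if_neg h2, if_neg h2]; exact hcap k
  · rw [hsum0]
    have hlt : ε * g0 j < ε * (r * g0 i) := mul_lt_mul_of_pos_left key0 hεpos
    have : 0 < δ * g0 i + (-ε) * g0 j := by rw [hδdef]; nlinarith
    linarith
  · rw [hsumm]
    have hlt : ε * (r * gm i) < ε * gm j := mul_lt_mul_of_pos_left keym hεpos
    have : 0 < (-δ) * gm i + ε * gm j := by rw [hδdef]; nlinarith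
    linarith
end
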